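/- The spike distribution is obtained from the Khinchin distribution via K'(m) = (½K(m) + ½K(m+1)) / (1 - ½K(1)) for all m ≥ 1. -/
import Mathlib


/-- Khinchin's distribution `K(m) = log₂((m+1)/(m+2)) - log₂(m/(m+1))`. -/
noncomputable def khinchin (m : ℕ) : ℝ :=
  Real.logb 2 ((m + 1) / (m + 2)) - Real.logb 2 (m / (m + 1))

/-- The spike distribution `K'(m) = log₃((m+2)/(m+3)) - log₃(m/(m+1))`. -/
noncomputable def spikeDist (m : ℕ) : ℝ :=
  Real.logb 3 ((m + 2) / (m + 3)) - Real.logb 3 (m / (m + 1))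

/-- The spike distribution is obtained from the Khinchin distribution via
`K'(m) = (½K(m) + ½K(m+1)) / (1 - ½K(1))` for all `m ≥ 1`. -/
theorem spikeDist_eq_khinchin (m : ℕ) (hm : 1 ≤ m) :
    spikeDist m =
      ((1/2) * khinchin m + (1/2) * khinchin (m + 1)) / (1 - (1/2) * khinchin 1) := by
  unfold spikeDist khinchin
  push_cast
  have hm' : (1:ℝ) ≤ (m:ℝ) := by exact_mod_cast hm
  have h0 : (m:ℝ) ≠ 0 := by positivity
  have h1 : (m:ℝ) + 1 ≠ 0 := by positivity
  have h2 : (m:ℝ) + 2 ≠ 0 := by positivity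
  have h3 : (m:ℝ) + 3 ≠ 0 := by positivity
  have h2' : (m:ℝ) + 1 + 1 ≠ 0 := by positivity
  have h3' : (m:ℝ) + 1 + 2 ≠ 0 := by positivity
  have l2 : Real.log 2 ≠ 0 := (Real.log_pos (by norm_num)).ne'
  have l3 : Real.log 3 ≠ 0 := (Real.log_pos (by norm_num)).ne'
  have e2' : Real.log ((m:ℝ) + 1 + 1) = Real.log ((m:ℝ) + 2) := by ring_nf
  have e3' : Real.log ((m:ℝ) + 1 + 2) = Real.log ((m:ℝ) + 3) := by ring_nf
  simp only [Real.logb, Real.log_div h0 h1, Real.log_div h1 h2, Real.log_div h2 h3,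
    Real.log_div h1 h2', Real.log_div h2' h3',
    Real.log_div (by norm_num : ((1:ℝ)+1) ≠ 0) (by norm_num : ((1:ℝ)+2) ≠ 0),
    Real.log_div (by norm_num : (1:ℝ) ≠ 0) (by norm_num : ((1:ℝ)+1) ≠ 0)]
  have e2 : Real.log ((1:ℝ)+1) = Real.log 2 := by norm_num
  have e3 : Real.log ((1:ℝ)+2) = Real.log 3 := by norm_num
  rw [e2, e3, e2', e3', Real.log_one]
  field_simp
  ring_nf
  simp [mul_assoc, mul_inv_cancel₀ l3]
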